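/- arXiv:1512.06961 — 2 statements merged into one kernel-verified Lean document; each statement's English description precedes it below -/
import Mathlib

section
/- Let k ≥ 1 and let (X_n)_{n≥1} and (Y_n)_{n≥1} be binary-valued stochastic processes on a common probability space such that the process X is independent of the process Y (the σ-algebras generated by (X_n)_{n≥1} and (Y_n)_{n≥1} are independent). Define Z_n = X_n ⊕ Y_n, where ⊕ is addition modulo 2. If X is asymptotically k-order two-faced, then Z is asymptotically k-order two-faced: for every u ∈ {0,1}^k, lim_{j→∞} P(Z_{j+1}…Z_{j+k} = u) = 2^{−k}. -/
/-! Write `b` for the `Y`-block `Y_{j+1} … Y_{j+k}`. On the event that it equals `b`, the `Z`-block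
equals `u` exactly when the `X`-block equals `u ⊕ b`, so by independence
`P(Z-block = u) = ∑_b P(X-block = u ⊕ b) · P(Y-block = b)`.
This is a convex combination, with weights summing to one, of finitely many sequences that
each tend to `2^{-k}`, hence it tends to `2^{-k}` as well. -/

open MeasureTheory ProbabilityTheory Filter

/-- The event that the block `X_{j+1} … X_{j+|u|}` of the binary process `X` equals the
word `u` (bits: `false = 0`, `true = 1`; the process is `X 1, X 2, …`). -/
def blockEvent {Ω : Type*} (X : ℕ → Ω → Bool) (j : ℕ) (u : List Bool) : Set Ω :=
  {ω | ∀ i, i < u.length → X (j + 1 + i) ω = u.getD i false}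

/-- A binary process `(X_n)_{n≥1}` is `k`-order two-faced if for every `j ≥ 0` and every
word `u ∈ {0,1}^k`, `P(X_{j+1}…X_{j+k} = u) = 2^{-k}`. -/
def IsTwoFaced {Ω : Type*} [MeasurableSpace Ω] (P : Measure Ω)
    (X : ℕ → Ω → Bool) (k : ℕ) : Prop :=
  ∀ (j : ℕ) (u : List Bool), u.length = k →
    (P (blockEvent X j u)).toReal = ((2 : ℝ) ^ k)⁻¹

/-- A binary process `(X_n)_{n≥1}` is asymptotically `k`-order two-faced if for every
word `u ∈ {0,1}^k`, `lim_{j→∞} P(X_{j+1}…X_{j+k} = u) = 2^{-k}`. -/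
def IsAsympTwoFaced {Ω : Type*} [MeasurableSpace Ω] (P : Measure Ω)
    (X : ℕ → Ω → Bool) (k : ℕ) : Prop :=
  ∀ u : List Bool, u.length = k →
    Tendsto (fun j : ℕ => (P (blockEvent X j u)).toReal) atTop
      (nhds (((2 : ℝ) ^ k)⁻¹))

open Topology

theorem tendsto_sum_mul_of_sum_eq_one {ι α : Type*} [Fintype ι] {l : Filter α}
    {p q : ι → α → ℝ} {c : ℝ} (hp : ∀ i, Tendsto (p i) l (𝓝 c)) (hq_nonneg : ∀ i a, 0 ≤ q i a)
    (hq_sum : ∀ a, ∑ i, q i a = 1) :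
    Tendsto (fun a => ∑ i, p i a * q i a) l (𝓝 c) := by
  have hq_le_one : ∀ i a, ‖q i a‖ ≤ 1 := fun i a => by
    rw [Real.norm_of_nonneg (hq_nonneg i a), ← hq_sum a]
    exact Finset.single_le_sum (fun j _ => hq_nonneg j a) (Finset.mem_univ i)
  have hdev : Tendsto (fun a => ∑ i, (p i a - c) * q i a) l (𝓝 0) := by
    simpa using tendsto_finsetSum Finset.univ fun i _ =>
      (tendsto_sub_nhds_zero_iff.2 (hp i)).zero_mul_isBoundedUnder_le
        (isBoundedUnder_of ⟨1, hq_le_one i⟩)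
  have hlim := hdev.add_const c
  rw [zero_add] at hlim
  refine hlim.congr fun a => ?_
  simp [sub_mul, Finset.sum_sub_distrib, ← Finset.mul_sum, hq_sum]

namespace ProbabilityTheory

theorem IndepFun.measure_preimage_eq_sum {Ω α β γ : Type*} [MeasurableSpace Ω]
    [MeasurableSpace α] [MeasurableSpace β] [Fintype β] [MeasurableSingletonClass β]
    {μ : Measure Ω} {A : Ω → α} {B : Ω → β} (hAB : IndepFun A B μ) (hB : Measurable B)
    (f : α → β → γ) {s : Set γ} (hs : ∀ b, MeasurableSet ((fun a => f a b) ⁻¹' s)) :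
    μ ((fun ω => f (A ω) (B ω)) ⁻¹' s) =
      ∑ b, μ (A ⁻¹' ((fun a => f a b) ⁻¹' s)) * μ (B ⁻¹' {b}) := by
  have hfiber : ∀ b, MeasurableSet (B ⁻¹' {b}) := fun b => hB (measurableSet_singleton b)
  calc μ ((fun ω => f (A ω) (B ω)) ⁻¹' s)
      = ∑ b, μ.restrict ((fun ω => f (A ω) (B ω)) ⁻¹' s) (B ⁻¹' {b}) := by
        rw [sum_measure_preimage_singleton _ fun b _ => hfiber b]
        simp
    _ = ∑ b, μ (A ⁻¹' ((fun a => f a b) ⁻¹' s) ∩ B ⁻¹' {b}) := by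
        refine Finset.sum_congr rfl fun b _ => ?_
        rw [Measure.restrict_apply (hfiber b), Set.inter_comm]
        congr 1
        ext ω
        simp +contextual [and_congr_left_iff]
    _ = _ := Finset.sum_congr rfl fun b _ =>
        hAB.measure_inter_preimage_eq_mul _ _ (hs b) (measurableSet_singleton b)

end ProbabilityTheory

def block {Ω : Type*} (X : ℕ → Ω → Bool) (k j : ℕ) (ω : Ω) : Fin k → Bool :=
  fun i => X (j + 1 + i) ω

section Block

variable {Ω : Type*} {X : ℕ → Ω → Bool} {k : ℕ}

theorem blockEvent_eq_preimage_block {u : List Bool} (hu : u.length = k) (j : ℕ) :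
    blockEvent X j u = block X k j ⁻¹' {fun i : Fin k => u.getD i false} := by
  subst hu
  ext ω
  simp only [blockEvent, block, Set.mem_ofPred_eq, Set.mem_preimage, Set.mem_singleton_iff,
    funext_iff, Fin.forall_iff]

theorem measurable_block [MeasurableSpace Ω] (hX : ∀ n, Measurable (X n)) (j : ℕ) :
    Measurable (block X k j) :=
  measurable_pi_lambda _ fun i => hX (j + 1 + i)

theorem indepFun_block [MeasurableSpace Ω] {μ : Measure Ω} {Y : ℕ → Ω → Bool}
    (h : IndepFun (fun ω (n : ℕ) => X n ω) (fun ω (n : ℕ) => Y n ω) μ) (j : ℕ) :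
    IndepFun (block X k j) (block Y k j) μ := by
  have hshift : Measurable fun (x : ℕ → Bool) (i : Fin k) => x (j + 1 + i) := by fun_prop
  exact h.comp hshift hshift

theorem isAsympTwoFaced_iff_block [MeasurableSpace Ω] {P : Measure Ω} :
    IsAsympTwoFaced P X k ↔ ∀ v : Fin k → Bool,
      Tendsto (fun j => (P (block X k j ⁻¹' {v})).toReal) atTop (𝓝 ((2 : ℝ) ^ k)⁻¹) := by
  constructor
  · intro h v
    have hv : (fun i : Fin k => (List.ofFn v).getD i false) = v := by
      funext i
      simp
    simpa only [blockEvent_eq_preimage_block List.length_ofFn, hv] using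
      h (List.ofFn v) List.length_ofFn
  · intro h u hu
    simpa only [blockEvent_eq_preimage_block hu] using h _

end Block

theorem xor_eq_iff_eq_xor {ι : Type*} {a b v : ι → Bool} :
    (fun i => xor (a i) (b i)) = v ↔ a = fun i => xor (v i) (b i) := by
  constructor <;> rintro rfl <;> funext i <;> simp

theorem xor_preserves_asymp_two_faced_general {Ω : Type*} [MeasurableSpace Ω]
    (P : Measure Ω) [IsProbabilityMeasure P] (k : ℕ)
    (X Y : ℕ → Ω → Bool) (hY : ∀ n, Measurable (Y n))
    (hindep : IndepFun (fun ω (n : ℕ) => X n ω) (fun ω (n : ℕ) => Y n ω) P)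
    (hXtf : IsAsympTwoFaced P X k) :
    IsAsympTwoFaced P (fun n ω => xor (X n ω) (Y n ω)) k := by
  rw [isAsympTwoFaced_iff_block] at hXtf ⊢
  intro v
  have hdecomp : ∀ j, P (block (fun n ω => xor (X n ω) (Y n ω)) k j ⁻¹' {v}) =
      ∑ b, P (block X k j ⁻¹' {fun i => xor (v i) (b i)}) * P (block Y k j ⁻¹' {b}) := by
    intro j
    have hsolve : ∀ b : Fin k → Bool,
        (fun a i => xor (a i) (b i)) ⁻¹' {v} = {fun i => xor (v i) (b i)} :=
      fun b => Set.ext fun a => xor_eq_iff_eq_xor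
    have h := (indepFun_block hindep j).measure_preimage_eq_sum
      (measurable_block hY j) (fun a b i => xor (a i) (b i)) (s := {v}) fun _ => .of_discrete
    simp only [hsolve] at h
    exact h
  have hY_sum : ∀ j, ∑ b, (P (block Y k j ⁻¹' {b})).toReal = 1 := fun j => by
    simpa [measureReal_def] using sum_measureReal_preimage_singleton (μ := P) Finset.univ
      fun b _ => measurable_block hY j (measurableSet_singleton b)
  simp_rw [hdecomp, ENNReal.toReal_sum fun _ _ =>
    ENNReal.mul_ne_top (measure_ne_top _ _) (measure_ne_top _ _), ENNReal.toReal_mul]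
  exact tendsto_sum_mul_of_sum_eq_one (fun b => hXtf _) (fun _ _ => ENNReal.toReal_nonneg) hY_sum

/-- if `X` and `Y` are binary processes on a common probability space, the
σ-algebras generated by `X` and `Y` are independent, and `X` is asymptotically `k`-order
two-faced, then `Z` with `Z_n = X_n ⊕ Y_n` is asymptotically `k`-order two-faced. -/
theorem xor_preserves_asymp_two_faced {Ω : Type*} [MeasurableSpace Ω]
    (P : Measure Ω) [IsProbabilityMeasure P] (k : ℕ) (hk : 1 ≤ k)
    (X Y : ℕ → Ω → Bool) (hX : ∀ n, Measurable (X n)) (hY : ∀ n, Measurable (Y n))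
    (hindep : IndepFun (fun ω (n : ℕ) => X n ω) (fun ω (n : ℕ) => Y n ω) P)
    (hXtf : IsAsympTwoFaced P X k) :
    IsAsympTwoFaced P (fun n ω => xor (X n ω) (Y n ω)) k :=
  xor_preserves_asymp_two_faced_general P k X Y hY hindep hXtf
end

section
/- Let k ≥ 1, π ∈ [0,1], let (X_n)_{n≥1} be an i.i.d. Bernoulli process with P(X_n = 0) = π and P(X_n = 1) = 1 − π, and let V = (V_1,…,V_k) be uniformly distributed on {0,1}^k and independent of (X_n). Define the output of the two-faced transformation τ^k by Y_{−k+1}…Y_0 = V_1…V_k and, for i ≥ 1, Y_i = X_i ⊕ Y_{i−k} ⊕ Y_{i−k+1} ⊕ … ⊕ Y_{i−1} (addition modulo 2). Then (Y_n)_{n≥1} is k-order two-faced: for every j ≥ 0 and every word u ∈ {0,1}^k, P(Y_{j+1}…Y_{j+k} = u) = 2^{−k}. -/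
/-!
The window `W_m = (Y_{m-k+1}, …, Y_m)` evolves by `W_m = s_{X_m}(W_{m-1})`, where `s_b` drops the
oldest bit and appends `b ⊕` (the xor of the whole window). Each `s_b` is a bijection of
`{0,1}^k`, since the kept bits together with the new bit recover the dropped one. Hence
`W_m = Φ_{X_1…X_m}(V)` for a permutation `Φ` of `{0,1}^k` depending only on the inputs, and as
`V` is uniform and independent of the inputs, `W_m` is uniform given each input word.
-/

open MeasureTheory ProbabilityTheory

theorem List.foldl_xor_injective (l : List Bool) : Function.Injective (l.foldl xor) := by
  induction l with
  | nil => exact Function.injective_id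
  | cons a l ih => exact ih.comp fun x y h => by simpa using h

theorem List.foldl_range_eq_foldl_ofFn {α β : Type*} (k : ℕ) (f : ℕ → α) (g : β → α → β) (b : β) :
    (List.range k).foldl (fun c r => g c (f r)) b = (List.ofFn fun r : Fin k => f r).foldl g b := by
  rw [List.ofFn_eq_map, List.foldl_map, ← List.map_coe_finRange_eq_range, List.foldl_map]

namespace TwoFaced

variable {n : ℕ}

def shift (b : Bool) (w : Fin (n + 1) → Bool) : Fin (n + 1) → Bool :=
  Fin.snoc (Fin.tail w) ((List.ofFn w).foldl xor b)

theorem shift_injective (b : Bool) : Function.Injective (shift (n := n) b) := by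
  intro w₁ w₂ h
  obtain ⟨htail, hlast⟩ := Fin.snoc_injective2 h
  rw [List.ofFn_succ, List.ofFn_succ, List.foldl_cons, List.foldl_cons] at hlast
  change List.foldl xor _ (List.ofFn (Fin.tail w₁)) = List.foldl xor _ (List.ofFn (Fin.tail w₂))
    at hlast
  rw [htail] at hlast
  have hhead : w₁ 0 = w₂ 0 := by simpa using List.foldl_xor_injective _ hlast
  rw [← Fin.cons_self_tail w₁, ← Fin.cons_self_tail w₂, hhead, htail]

noncomputable def shiftPerm (b : Bool) : Equiv.Perm (Fin (n + 1) → Bool) :=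
  Equiv.ofBijective (shift b) (Finite.injective_iff_bijective.1 (shift_injective b))

noncomputable def shiftPermIter : (m : ℕ) → (Fin m → Bool) → Equiv.Perm (Fin (n + 1) → Bool)
  | 0, _ => Equiv.refl _
  | m + 1, x => (shiftPermIter m (Fin.init x)).trans (shiftPerm (x (Fin.last m)))

def window (y : ℤ → Bool) (m : ℕ) : Fin (n + 1) → Bool :=
  fun r => y (m - n + r)

theorem window_succ (x : ℕ → Bool) (y : ℤ → Bool) (m : ℕ)
    (hy : y (m + 1 : ℕ) = (List.range (n + 1)).foldl
      (fun b (r : ℕ) => xor b (y ((m + 1 : ℕ) - (n + 1 : ℕ) + r))) (x (m + 1))) :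
    window y (m + 1) = shift (x (m + 1)) (window (n := n) y m) := by
  funext r
  refine Fin.lastCases ?_ (fun i => ?_) r
  · rw [shift, Fin.snoc_last, window, Fin.val_last]
    convert hy using 1
    · congr 1; push_cast; ring
    · rw [List.foldl_range_eq_foldl_ofFn]
      congr 2; funext r; simp only [window]; congr 1; push_cast; ring
  · simp only [shift, Fin.snoc_castSucc, Fin.tail, window, Fin.val_castSucc, Fin.val_succ]
    congr 1; push_cast; ring

theorem window_eq_shiftPermIter (x : ℕ → Bool) (v : Fin (n + 1) → Bool) (y : ℤ → Bool)
    (hseed : ∀ r : Fin (n + 1), y (1 - ((n + 1 : ℕ) : ℤ) + r) = v r)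
    -- as in the theorem, `List.range (n + 1)` is coerced here to a list of integers
    (hrec : ∀ i : ℕ, 1 ≤ i → y i = (List.range (n + 1)).foldl
      (fun b r => xor b (y (i - (n + 1 : ℕ) + r))) (x i)) (m : ℕ) :
    window y m = shiftPermIter m (fun i : Fin m => x (i + 1)) v := by
  induction m with
  | zero => funext r; change _ = v r; rw [← hseed r]; simp only [window]; congr 1; push_cast; ring
  | succ m ih =>
    have hy := hrec (m + 1) m.succ_pos
    simp only [List.pure_def, List.bind_eq_flatMap, ← List.map_eq_flatMap, List.foldl_map] at hy
    rw [window_succ x y m hy, ih]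
    rfl

end TwoFaced

theorem ProbabilityTheory.IndepFun.measure_perm_apply_eq {Ω α β : Type*} [MeasurableSpace Ω]
    {P : Measure Ω} [IsProbabilityMeasure P] [MeasurableSpace α] [MeasurableSingletonClass α]
    [Fintype β] [MeasurableSpace β] [MeasurableSingletonClass β] {V : Ω → α} {G : Ω → β}
    (hV : Measurable V) (hG : Measurable G) (hVG : IndepFun V G P) (F : β → Equiv.Perm α)
    {c : ENNReal} (hc : ∀ a, P (V ⁻¹' {a}) = c) (a : α) :
    P {ω | F (G ω) (V ω) = a} = c := by
  have hsplit : {ω | F (G ω) (V ω) = a} = ⋃ g, G ⁻¹' {g} ∩ V ⁻¹' {(F g).symm a} := by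
    ext ω
    simp [Equiv.eq_symm_apply]
  have hdisj : Pairwise (Function.onFun Disjoint fun g => G ⁻¹' {g} ∩ V ⁻¹' {(F g).symm a}) :=
    fun g g' hne => ((Set.disjoint_singleton.2 hne).preimage G).mono
      Set.inter_subset_left Set.inter_subset_left
  rw [hsplit, measure_iUnion hdisj fun g =>
    (hG (measurableSet_singleton g)).inter (hV (measurableSet_singleton _)), tsum_fintype]
  calc ∑ g, P (G ⁻¹' {g} ∩ V ⁻¹' {(F g).symm a})
      = ∑ g, P (G ⁻¹' {g}) * c := by
        refine Finset.sum_congr rfl fun g _ => ?_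
        rw [hVG.symm.measure_inter_preimage_eq_mul _ _ (measurableSet_singleton _)
          (measurableSet_singleton _), hc]
    _ = c := by
        rw [← Finset.sum_mul, sum_measure_preimage_singleton _ fun g _ =>
          hG (measurableSet_singleton g)]
        simp

theorem two_faced_transform_uniform_seed_general {Ω : Type*} [MeasurableSpace Ω]
    (P : Measure Ω) [IsProbabilityMeasure P]
    (k : ℕ) (hk : 1 ≤ k)
    (X : ℕ → Ω → Bool) (hX : ∀ n, Measurable (X n))
    (V : Ω → Fin k → Bool) (hVmeas : Measurable V)
    (hVunif : ∀ v : Fin k → Bool, (P {ω | V ω = v}).toReal = ((2 : ℝ) ^ k)⁻¹)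
    (hVindep : IndepFun V (fun ω (n : {n : ℕ // 1 ≤ n}) => X n.1 ω) P)
    (Y : ℤ → Ω → Bool)
    (hseed : ∀ (r : Fin k) (ω : Ω), Y (1 - (k : ℤ) + r) ω = V ω r)
    (hrec : ∀ i : ℕ, 1 ≤ i → ∀ ω : Ω,
      Y (i : ℤ) ω =
        (List.range k).foldl (fun b r => xor b (Y ((i : ℤ) - k + r) ω)) (X i ω)) :
    ∀ (j : ℕ) (u : List Bool), u.length = k →
      (P {ω | ∀ i, i < k → Y ((j : ℤ) + 1 + i) ω = u.getD i false}).toReal =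
        ((2 : ℝ) ^ k)⁻¹ := by
  obtain ⟨n, rfl⟩ : ∃ n, k = n + 1 := ⟨k - 1, by omega⟩
  intro j u _
  let u' : Fin (n + 1) → Bool := fun i => u.getD i false
  let G : Ω → Fin (j + n + 1) → Bool := fun ω i => X (i + 1) ω
  have hG : Measurable G := measurable_pi_lambda _ fun i => hX _
  have hrestrict : Measurable fun (x : {n : ℕ // 1 ≤ n} → Bool) (i : Fin (j + n + 1)) =>
      x ⟨i + 1, i.val.succ_pos⟩ :=
    measurable_pi_lambda _ fun _ => measurable_pi_apply _
  have hVG : IndepFun V G P := hVindep.comp measurable_id hrestrict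
  have hevent : {ω | ∀ i, i < n + 1 → Y ((j : ℤ) + 1 + i) ω = u.getD i false}
      = {ω | TwoFaced.shiftPermIter (j + n + 1) (G ω) (V ω) = u'} := by
    ext ω
    have hwindow : TwoFaced.window (Y · ω) (j + n + 1) =
        TwoFaced.shiftPermIter (j + n + 1) (G ω) (V ω) :=
      TwoFaced.window_eq_shiftPermIter (X · ω) (V ω) (Y · ω) (hseed · ω) (fun i hi => hrec i hi ω) _
    rw [Set.mem_ofPred_eq, Set.mem_ofPred_eq, ← hwindow, funext_iff, Fin.forall_iff]
    refine forall₂_congr fun i _ => ?_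
    simp only [TwoFaced.window, u']
    push_cast
    ring_nf
  have hVconst : ∀ v, P (V ⁻¹' {v}) = P (V ⁻¹' {u'}) := fun v =>
    (ENNReal.toReal_eq_toReal_iff' (measure_ne_top _ _) (measure_ne_top _ _)).1
      ((hVunif v).trans (hVunif u').symm)
  rw [hevent, hVG.measure_perm_apply_eq hVmeas hG _ hVconst]
  exact hVunif u'

/-- let `(X_n)_{n≥1}` be an i.i.d. Bernoulli process with
`P(X_n = 0) = π`, `P(X_n = 1) = 1 - π`, and let the seed `V` be uniformly distributed on
`{0,1}^k` and independent of `(X_n)_{n≥1}`. Define `Y_{-k+1}…Y_0 = V` and, for `i ≥ 1`,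
`Y_i = X_i ⊕ Y_{i-k} ⊕ Y_{i-k+1} ⊕ ⋯ ⊕ Y_{i-1}` (the two-faced conversion `τ^k`).
Then `(Y_n)_{n≥1}` is `k`-order two-faced: for every `j ≥ 0` and every `u ∈ {0,1}^k`,
`P(Y_{j+1}…Y_{j+k} = u) = 2^{-k}` (bits: `false = 0`, `true = 1`). -/
theorem two_faced_transform_uniform_seed {Ω : Type*} [MeasurableSpace Ω]
    (P : Measure Ω) [IsProbabilityMeasure P]
    (k : ℕ) (hk : 1 ≤ k) (π : ℝ) (hπ : π ∈ Set.Icc (0 : ℝ) 1)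
    (X : ℕ → Ω → Bool) (hX : ∀ n, Measurable (X n))
    (hBern : ∀ n : ℕ, 1 ≤ n → (P {ω | X n ω = false}).toReal = π ∧
      (P {ω | X n ω = true}).toReal = 1 - π)
    (hiid : iIndepFun
      (fun n : {n : ℕ // 1 ≤ n} => X n.1) P)
    (V : Ω → Fin k → Bool) (hVmeas : Measurable V)
    (hVunif : ∀ v : Fin k → Bool, (P {ω | V ω = v}).toReal = ((2 : ℝ) ^ k)⁻¹)
    (hVindep : IndepFun V (fun ω (n : {n : ℕ // 1 ≤ n}) => X n.1 ω) P)
    (Y : ℤ → Ω → Bool)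
    (hseed : ∀ (r : Fin k) (ω : Ω), Y (1 - (k : ℤ) + r) ω = V ω r)
    (hrec : ∀ i : ℕ, 1 ≤ i → ∀ ω : Ω,
      Y (i : ℤ) ω =
        (List.range k).foldl (fun b r => xor b (Y ((i : ℤ) - k + r) ω)) (X i ω)) :
    ∀ (j : ℕ) (u : List Bool), u.length = k →
      (P {ω | ∀ i, i < k → Y ((j : ℤ) + 1 + i) ω = u.getD i false}).toReal =
        ((2 : ℝ) ^ k)⁻¹ :=
  two_faced_transform_uniform_seed_general P k hk X hX V hVmeas hVunif hVindep Y hseed hrec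
end
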